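/- arXiv:2602.04283 — 2 statements merged into one kernel-verified Lean document; each statement's English description precedes it below -/
import Mathlib

section
/- Let s ≥ 5 be an integer and let n = 2s (so n ≥ 10 is even). Then λ₁(D(K₁ ∨ (K_{n−2} ∪ K₁))) < λ₁(D(S_{n,n/2})). -/
open Finset

/-- The distance matrix of a graph: the `(i,j)` entry is the graph distance. -/
noncomputable def distMatrix {V : Type*} [Fintype V] (G : SimpleGraph V) : Matrix V V ℝ :=
  fun i j => (G.dist i j : ℝ)

/-- The distance spectral radius: the largest eigenvalue of the distance matrix
(for a connected graph the eigenvalue set is nonempty, and the distance matrix is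
real symmetric, so its largest eigenvalue is the supremum of its real eigenvalues). -/
noncomputable def distSpecRad {V : Type*} [Fintype V] (G : SimpleGraph V) : ℝ := by
  classical
  exact sSup {μ : ℝ | Module.End.HasEigenvalue (Matrix.toLin' (distMatrix G)) μ}

/-- The join `G ∨ H` of two graphs: disjoint union together with all edges in between. -/
def graphJoin {α β : Type*} (G : SimpleGraph α) (H : SimpleGraph β) : SimpleGraph (α ⊕ β) where
  Adj x y :=
    match x, y with
    | Sum.inl a, Sum.inl b => G.Adj a b
    | Sum.inr a, Sum.inr b => H.Adj a b
    | _, _ => True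
  symm := by
    constructor
    rintro (a | a) (b | b) h
    · exact G.adj_symm h
    · trivial
    · trivial
    · exact H.adj_symm h
  loopless := by
    constructor
    rintro (a | a) h
    · exact G.ne_of_adj h rfl
    · exact H.ne_of_adj h rfl

/-- `S_{n,t} = K_t ∨ (n-t)K₁`. -/
def starLike (n t : ℕ) : SimpleGraph (Fin t ⊕ Fin (n - t)) :=
  graphJoin (⊤ : SimpleGraph (Fin t)) (⊥ : SimpleGraph (Fin (n - t)))

/-- The sum of the values of `f` over the edges incident with `v`. -/
noncomputable def incSum {V : Type*} [Fintype V] (G : SimpleGraph V) (f : Sym2 V → ℕ)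
    (v : V) : ℕ := by
  classical
  exact ∑ e ∈ Finset.univ.filter (fun e : Sym2 V => e ∈ G.incidenceSet v), f e

/-- A `k`-matching of `G`: a function on edges with values in `{0,…,k}` whose sum over
the edges incident with any vertex is at most `k`. -/
def IsKMatching {V : Type*} [Fintype V] (G : SimpleGraph V) (k : ℕ) (f : Sym2 V → ℕ) : Prop :=
  (∀ e, f e ≤ k) ∧ (∀ e, e ∉ G.edgeSet → f e = 0) ∧ (∀ v : V, incSum G f v ≤ k)

/-- A perfect `k`-matching: the sum over the edges incident with any vertex equals `k`. -/
def IsPerfectKMatching {V : Type*} [Fintype V] (G : SimpleGraph V) (k : ℕ)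
    (f : Sym2 V → ℕ) : Prop :=
  IsKMatching G k f ∧ ∀ v : V, incSum G f v = k

/-- `G` has a perfect `k`-matching. -/
def HasPerfectKMatching {V : Type*} [Fintype V] (G : SimpleGraph V) (k : ℕ) : Prop :=
  ∃ f : Sym2 V → ℕ, IsPerfectKMatching G k f

/-- `G` is `k`-`d`-critical. -/
def IsKDCritical {V : Type*} [Fintype V] (G : SimpleGraph V) (k d : ℕ) : Prop :=
  ∀ v : V, ∃ h : Sym2 V → ℕ, IsKMatching G k h ∧ incSum G h v = k - d ∧
    ∀ u : V, u ≠ v → incSum G h u = k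

/-- `i(G - S)`: the number of isolated vertices of `G - S`. -/
noncomputable def numIsolated {V : Type*} [Fintype V] (G : SimpleGraph V) (S : Set V) : ℕ :=
  Nat.card {v : ↥(Sᶜ) | ∀ u, ¬ (G.induce Sᶜ).Adj v u}

/-- `odd(G - S)`: the number of nontrivial odd connected components of `G - S`. -/
noncomputable def numOddNontrivial {V : Type*} [Fintype V] (G : SimpleGraph V) (S : Set V) : ℕ :=
  Nat.card {c : (G.induce Sᶜ).ConnectedComponent //
    Odd (Nat.card c.supp) ∧ 1 < Nat.card c.supp}

/-- `K₁ ∨ (K_{n-2} ∪ K₁)`. -/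
def Gstar (n : ℕ) : SimpleGraph (Fin 1 ⊕ (Fin (n - 2) ⊕ Fin 1)) :=
  graphJoin (⊤ : SimpleGraph (Fin 1))
    ((⊤ : SimpleGraph (Fin (n - 2))) ⊕g (⊥ : SimpleGraph (Fin 1)))

/-- `K₁ ∨ (K_{n-3} ∪ 2K₁)`. -/
def GstarPM (n : ℕ) : SimpleGraph (Fin 1 ⊕ (Fin (n - 3) ⊕ Fin 2)) :=
  graphJoin (⊤ : SimpleGraph (Fin 1))
    ((⊤ : SimpleGraph (Fin (n - 3))) ⊕g (⊥ : SimpleGraph (Fin 2)))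

/-- `K_s ∨ (K_{n-2s} ∪ sK₁)`. -/
def Gsn (n s : ℕ) : SimpleGraph (Fin s ⊕ (Fin (n - 2 * s) ⊕ Fin s)) :=
  graphJoin (⊤ : SimpleGraph (Fin s))
    ((⊤ : SimpleGraph (Fin (n - 2 * s))) ⊕g (⊥ : SimpleGraph (Fin s)))

/-- The "generalized factor-critical" condition for odd `k`:
`odd(G-S) + k·i(G-S) ≤ k|S| - 1` for every nonempty proper subset `S` of `V(G)`. -/
def IsGFCodd {V : Type*} [Fintype V] (G : SimpleGraph V) (k : ℕ) : Prop :=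
  ∀ S : Set V, S.Nonempty → S ≠ Set.univ →
    (numOddNontrivial G S : ℤ) + k * numIsolated G S ≤ k * S.ncard - 1

/-- The "generalized bicritical" condition for odd `k`:
`odd(G-S) + k·i(G-S) ≤ k|S| - 2` for every nonempty proper subset `S` of `V(G)`. -/
def IsGBCodd {V : Type*} [Fintype V] (G : SimpleGraph V) (k : ℕ) : Prop :=
  ∀ S : Set V, S.Nonempty → S ≠ Set.univ →
    (numOddNontrivial G S : ℤ) + k * numIsolated G S ≤ k * S.ncard - 2

/-- The "generalized factor-critical / bicritical" condition for even `k`: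
`i(G-S) ≤ |S| - 1` for every nonempty proper subset `S` of `V(G)`. -/
def IsGFCBCeven {V : Type*} [Fintype V] (G : SimpleGraph V) : Prop :=
  ∀ S : Set V, S.Nonempty → S ≠ Set.univ →
    (numIsolated G S : ℤ) ≤ S.ncard - 1

/-- The Wiener index of a graph on `Fin n`: the sum of distances over pairs `i < j`. -/
noncomputable def wienerFin {n : ℕ} (G : SimpleGraph (Fin n)) : ℕ :=
  ∑ p ∈ Finset.univ.filter (fun p : Fin n × Fin n => p.1 < p.2), G.dist p.1 p.2


section Aux

open Finset

lemma eigSet_eq {V : Type*} [Fintype V] [DecidableEq V] (A : Matrix V V ℝ) :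
    {μ : ℝ | Module.End.HasEigenvalue (Matrix.toLin' A) μ}
      = {μ : ℝ | ∃ v : V → ℝ, v ≠ 0 ∧ A.mulVec v = μ • v} := by
  ext μ
  simp only [Set.mem_setOf_eq]
  constructor
  · intro h
    obtain ⟨v, hv⟩ := h.exists_hasEigenvector
    refine ⟨v, hv.2, ?_⟩
    have h2 := Module.End.mem_eigenspace_iff.mp hv.1
    rwa [Matrix.toLin'_apply] at h2
  · rintro ⟨v, hv0, hv⟩
    refine Module.End.hasEigenvalue_of_hasEigenvector
      ⟨Module.End.mem_eigenspace_iff.mpr ?_, hv0⟩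
    rwa [Matrix.toLin'_apply]

lemma mulVec_apply' {V : Type*} [Fintype V] (A : Matrix V V ℝ) (v : V → ℝ) (x : V) :
    A.mulVec v x = ∑ y, A x y * v y := rfl

lemma quadform_eq {V : Type*} [Fintype V] {A : Matrix V V ℝ} {μ : ℝ} {v : V → ℝ}
    (hv : A.mulVec v = μ • v) :
    μ * ∑ i, v i ^ 2 = ∑ i, ∑ j, A i j * (v i * v j) := by
  have h1 : ∀ i, ∑ j, A i j * v j = μ * v i := by
    intro i
    have h2 := congrFun hv i
    rw [mulVec_apply'] at h2
    simpa using h2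
  calc μ * ∑ i, v i ^ 2 = ∑ i, v i * (μ * v i) := by
        rw [Finset.mul_sum]; exact Finset.sum_congr rfl fun i _ => by ring
    _ = ∑ i, v i * ∑ j, A i j * v j := Finset.sum_congr rfl fun i _ => by rw [h1]
    _ = ∑ i, ∑ j, A i j * (v i * v j) := Finset.sum_congr rfl fun i _ => by
        rw [Finset.mul_sum]; exact Finset.sum_congr rfl fun j _ => by ring

lemma sum_sq_pos' {V : Type*} [Fintype V] {v : V → ℝ} (hv : v ≠ 0) :
    0 < ∑ i, v i ^ 2 := by
  obtain ⟨i, hi⟩ := Function.ne_iff.mp hv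
  refine Finset.sum_pos' (fun j _ => sq_nonneg _) ⟨i, Finset.mem_univ i, ?_⟩
  exact lt_of_le_of_ne (sq_nonneg _) (Ne.symm (pow_ne_zero 2 hi))

lemma eig_le_rowsum {V : Type*} [Fintype V] {A : Matrix V V ℝ} {K : ℝ}
    (hA : ∀ i j, 0 ≤ A i j) (hK : ∀ i, ∑ j, A i j ≤ K)
    {μ : ℝ} {v : V → ℝ} (hv0 : v ≠ 0) (hv : A.mulVec v = μ • v) : μ ≤ K := by
  obtain ⟨i0, hi0⟩ := Function.ne_iff.mp hv0
  obtain ⟨i, -, hi⟩ := Finset.exists_max_image Finset.univ (fun k => |v k|)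
    ⟨i0, Finset.mem_univ _⟩
  have hvi : 0 < |v i| := lt_of_lt_of_le (abs_pos.mpr hi0) (hi i0 (Finset.mem_univ _))
  have h1 : ∑ j, A i j * v j = μ * v i := by
    have h2 := congrFun hv i
    rw [mulVec_apply'] at h2
    simpa using h2
  have h2 : |μ| * |v i| ≤ K * |v i| := by
    calc |μ| * |v i| = |∑ j, A i j * v j| := by rw [h1, abs_mul]
      _ ≤ ∑ j, |A i j * v j| := Finset.abs_sum_le_sum_abs _ _
      _ ≤ ∑ j, A i j * |v i| := Finset.sum_le_sum fun j _ => by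
          rw [abs_mul, abs_of_nonneg (hA i j)]
          exact mul_le_mul_of_nonneg_left (hi j (Finset.mem_univ _)) (hA i j)
      _ = (∑ j, A i j) * |v i| := by rw [Finset.sum_mul]
      _ ≤ K * |v i| := mul_le_mul_of_nonneg_right (hK i) (abs_nonneg _)
  exact le_trans (le_abs_self μ) (le_of_mul_le_mul_right h2 hvi)

lemma dist_eq_two' {V : Type*} {G : SimpleGraph V} {u v w : V} (hne : u ≠ v)
    (hadj : ¬ G.Adj u v) (h1 : G.Adj u w) (h2 : G.Adj w v) : G.dist u v = 2 := by
  have hle : G.dist u v ≤ 2 := by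
    have h3 := SimpleGraph.dist_le (SimpleGraph.Walk.cons h1 h2.toWalk)
    simpa using h3
  have h0 : G.dist u v ≠ 0 := by
    intro h
    rcases SimpleGraph.dist_eq_zero_iff_eq_or_not_reachable.mp h with h' | h'
    · exact hne h'
    · exact h' ⟨SimpleGraph.Walk.cons h1 h2.toWalk⟩
  have hne1 : G.dist u v ≠ 1 := fun h => hadj (SimpleGraph.dist_eq_one_iff_adj.mp h)
  omega

lemma sum_ite_ne {k : ℕ} (i : Fin k) (c : ℝ) :
    ∑ j : Fin k, (if i = j then (0:ℝ) else c) = ((k : ℝ) - 1) * c := by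
  have h1 : ∀ j : Fin k, (if i = j then (0:ℝ) else c) = c - (if i = j then c else 0) :=
    fun j => by split <;> ring
  rw [Finset.sum_congr rfl fun j _ => h1 j, Finset.sum_sub_distrib,
    Finset.sum_ite_eq, if_pos (Finset.mem_univ i), Finset.sum_const]
  simp [Finset.card_univ]
  ring

lemma offdiag_quad {k : ℕ} (w : Fin k → ℝ) :
    ∑ i, ∑ j, (if i = j then (0:ℝ) else 1) * (w i * w j)
      = (∑ i, w i) ^ 2 - ∑ i, w i ^ 2 := by
  have h1 : ∀ i, ∑ j, (if i = j then (0:ℝ) else 1) * (w i * w j)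
      = w i * (∑ j, w j) - w i ^ 2 := by
    intro i
    have h2 : ∀ j, (if i = j then (0:ℝ) else 1) * (w i * w j)
        = w i * w j - (if i = j then w i * w j else 0) := by
      intro j
      split
      · next h => subst h; ring
      · ring
    rw [Finset.sum_congr rfl fun j _ => h2 j, Finset.sum_sub_distrib,
      Finset.sum_ite_eq, if_pos (Finset.mem_univ i), ← Finset.mul_sum]
    ring
  rw [Finset.sum_congr rfl fun i _ => h1 i, Finset.sum_sub_distrib, ← Finset.sum_mul]
  ring

lemma keyineq {S a b m p : ℝ} (hS : 5 ≤ S) (hp : m ^ 2 ≤ (2 * S - 2) * p) :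
    S * (2 * a * m + 2 * a * b + 4 * (m * b) + (m ^ 2 - p))
      ≤ (2 * S ^ 2 + 2 * S - 5) * (a ^ 2 + (p + b ^ 2)) := by
  have hE : (0:ℝ) ≤ 8 * S ^ 2 + 10 * S - 25 := by nlinarith
  have hEpos : (0:ℝ) < 8 * S ^ 2 + 10 * S - 25 := by nlinarith
  have hcub : (0:ℝ) ≤ 60 * S ^ 3 - 175 * S ^ 2 - 500 * S + 625 := by
    nlinarith [mul_nonneg (mul_nonneg (sub_nonneg.mpr hS) (sub_nonneg.mpr hS))
      (sub_nonneg.mpr hS), sq_nonneg (S - 5)]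
  have T1 : (0:ℝ) ≤ (8 * S ^ 2 + 10 * S - 25) * (5 * m - 2 * S * a - 4 * S * b) ^ 2 :=
    mul_nonneg hE (sq_nonneg _)
  have T2 : (0:ℝ) ≤ ((8 * S ^ 2 + 10 * S - 25) * a - (4 * S ^ 2 + 5 * S) * b) ^ 2 :=
    sq_nonneg _
  have T3 : (0:ℝ) ≤ (60 * S ^ 3 - 175 * S ^ 2 - 500 * S + 625) * b ^ 2 :=
    mul_nonneg hcub (sq_nonneg _)
  have T4 : (0:ℝ) ≤ ((8 * S ^ 2 + 10 * S - 25) * (2 * S + 5)) * ((2 * S - 2) * p - m ^ 2) :=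
    mul_nonneg (mul_nonneg hE (by linarith)) (by linarith)
  have main : 0 ≤ (8 * S ^ 2 + 10 * S - 25) *
      ((2 * S ^ 2 + 2 * S - 5) * (a ^ 2 + (p + b ^ 2)) -
        S * (2 * a * m + 2 * a * b + 4 * (m * b) + (m ^ 2 - p))) := by
    nlinarith [T1, T2, T3, T4]
  nlinarith [main, hEpos, mul_pos hEpos hEpos]

lemma distSpecRad_eq {V : Type*} [Fintype V] (G : SimpleGraph V) :
    distSpecRad G
      = sSup {μ : ℝ | ∃ v : V → ℝ, v ≠ 0 ∧ (distMatrix G).mulVec v = μ • v} := by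
  classical
  unfold distSpecRad
  congr 1
  exact eigSet_eq _

end Aux

set_option maxHeartbeats 1000000 in
theorem statement12 (s n : ℕ) (hs : 5 ≤ s) (hn : n = 2 * s) :
    distSpecRad (Gstar n) < distSpecRad (starLike n (n / 2)) := by
  subst hn
  classical
  have hS5 : (5:ℝ) ≤ (s:ℝ) := by exact_mod_cast hs
  set S : ℝ := (s : ℝ) with hSdef
  have hSpos : (0:ℝ) < S := by linarith
  have hRsq0 : (0:ℝ) ≤ 5*S^2 - 2*S + 1 := by nlinarith
  set R : ℝ := Real.sqrt (5*S^2 - 2*S + 1) with hRdef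
  have hR2 : R^2 = 5*S^2 - 2*S + 1 := Real.sq_sqrt hRsq0
  have hRpos : 0 < R := Real.sqrt_pos.mpr (by nlinarith)
  set lam : ℝ := (3*(S-1) + R)/2 with hlamdef
  set C : ℝ := (2*S^2 + 2*S - 5)/S with hCdef
  have hCpos : 0 < C := by
    rw [hCdef]
    apply div_pos (by nlinarith) hSpos
  -- C < lam
  have hSR : S^2 + 7*S - 10 < S * R := by
    have h1 : (S^2 + 7*S - 10)^2 < (S*R)^2 := by
      rw [mul_pow, hR2]
      nlinarith [sq_nonneg (S-5), mul_nonneg (sub_nonneg.mpr hS5) (sub_nonneg.mpr hS5),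
        mul_nonneg (mul_nonneg (sub_nonneg.mpr hS5) (sub_nonneg.mpr hS5)) (sub_nonneg.mpr hS5),
        mul_nonneg (mul_nonneg (mul_nonneg (sub_nonneg.mpr hS5) (sub_nonneg.mpr hS5))
          (sub_nonneg.mpr hS5)) (sub_nonneg.mpr hS5)]
    have h2 : 0 ≤ S * R := by positivity
    exact lt_of_pow_lt_pow_left₀ 2 h2 h1
  have hClam : C < lam := by
    rw [hCdef, hlamdef, div_lt_div_iff₀ hSpos two_pos]
    linarith [hSR]
  -- ==================== upper bound for Gstar ====================
  have hup : distSpecRad (Gstar (2*s)) ≤ C := by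
    rw [distSpecRad_eq]
    refine Real.sSup_le ?_ hCpos.le
    rintro μ ⟨v, hv0, hv⟩
    -- cast facts
    have hkR : ((2*s - 2 : ℕ) : ℝ) = 2*S - 2 := by
      rw [Nat.cast_sub (by omega : (2:ℕ) ≤ 2*s)]
      push_cast [hSdef]
      ring
    -- distance entry lemmas
    have hD1 : ∀ x y : Fin 1, distMatrix (Gstar (2*s)) (Sum.inl x) (Sum.inl y) = 0 := by
      intro x y
      have hxy : x = y := Subsingleton.elim x y
      subst hxy
      simp [distMatrix, SimpleGraph.dist_self]
    have hD2 : ∀ (x : Fin 1) (j : Fin (2*s-2)),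
        distMatrix (Gstar (2*s)) (Sum.inl x) (Sum.inr (Sum.inl j)) = 1 := by
      intro x j
      have h : (Gstar (2*s)).dist (Sum.inl x) (Sum.inr (Sum.inl j)) = 1 :=
        SimpleGraph.dist_eq_one_iff_adj.mpr (by simp [Gstar, graphJoin])
      simp [distMatrix, h]
    have hD3 : ∀ (x y : Fin 1),
        distMatrix (Gstar (2*s)) (Sum.inl x) (Sum.inr (Sum.inr y)) = 1 := by
      intro x y
      have h : (Gstar (2*s)).dist (Sum.inl x) (Sum.inr (Sum.inr y)) = 1 :=
        SimpleGraph.dist_eq_one_iff_adj.mpr (by simp [Gstar, graphJoin])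
      simp [distMatrix, h]
    have hD4 : ∀ (j : Fin (2*s-2)) (x : Fin 1),
        distMatrix (Gstar (2*s)) (Sum.inr (Sum.inl j)) (Sum.inl x) = 1 := by
      intro j x
      have h : (Gstar (2*s)).dist (Sum.inr (Sum.inl j)) (Sum.inl x) = 1 :=
        SimpleGraph.dist_eq_one_iff_adj.mpr (by simp [Gstar, graphJoin])
      simp [distMatrix, h]
    have hD5 : ∀ i j : Fin (2*s-2),
        distMatrix (Gstar (2*s)) (Sum.inr (Sum.inl i)) (Sum.inr (Sum.inl j))
          = if i = j then 0 else 1 := by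
      intro i j
      by_cases h : i = j
      · subst h
        simp [distMatrix, SimpleGraph.dist_self]
      · have hd : (Gstar (2*s)).dist (Sum.inr (Sum.inl i)) (Sum.inr (Sum.inl j)) = 1 :=
          SimpleGraph.dist_eq_one_iff_adj.mpr (by simp [Gstar, graphJoin, SimpleGraph.sum_adj, h])
        simp [distMatrix, hd, h]
    have hD6 : ∀ (i : Fin (2*s-2)) (y : Fin 1),
        distMatrix (Gstar (2*s)) (Sum.inr (Sum.inl i)) (Sum.inr (Sum.inr y)) = 2 := by
      intro i y
      have hd : (Gstar (2*s)).dist (Sum.inr (Sum.inl i)) (Sum.inr (Sum.inr y)) = 2 := by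
        apply dist_eq_two' (w := Sum.inl 0)
        · simp
        · simp [Gstar, graphJoin, SimpleGraph.sum_adj]
        · simp [Gstar, graphJoin]
        · simp [Gstar, graphJoin]
      simp [distMatrix, hd]
    have hD7 : ∀ (y : Fin 1) (i : Fin (2*s-2)),
        distMatrix (Gstar (2*s)) (Sum.inr (Sum.inr y)) (Sum.inr (Sum.inl i)) = 2 := by
      intro y i
      have hd : (Gstar (2*s)).dist (Sum.inr (Sum.inr y)) (Sum.inr (Sum.inl i)) = 2 := by
        apply dist_eq_two' (w := Sum.inl 0)
        · simp
        · simp [Gstar, graphJoin, SimpleGraph.sum_adj]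
        · simp [Gstar, graphJoin]
        · simp [Gstar, graphJoin]
      simp [distMatrix, hd]
    have hD8 : ∀ (y : Fin 1) (x : Fin 1),
        distMatrix (Gstar (2*s)) (Sum.inr (Sum.inr y)) (Sum.inl x) = 1 := by
      intro y x
      have h : (Gstar (2*s)).dist (Sum.inr (Sum.inr y)) (Sum.inl x) = 1 :=
        SimpleGraph.dist_eq_one_iff_adj.mpr (by simp [Gstar, graphJoin])
      simp [distMatrix, h]
    have hD9 : ∀ (x y : Fin 1),
        distMatrix (Gstar (2*s)) (Sum.inr (Sum.inr x)) (Sum.inr (Sum.inr y)) = 0 := by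
      intro x y
      have hxy : x = y := Subsingleton.elim x y
      subst hxy
      simp [distMatrix, SimpleGraph.dist_self]
    -- quadratic form
    have hquad := quadform_eq hv
    have hnorm : ∑ x, v x ^ 2
        = v (Sum.inl 0) ^ 2 + ((∑ i, v (Sum.inr (Sum.inl i)) ^ 2)
            + v (Sum.inr (Sum.inr 0)) ^ 2) := by
      rw [Fintype.sum_sum_type, Fintype.sum_sum_type, Fin.sum_univ_one, Fin.sum_univ_one]
    have hQ : (∑ x, ∑ y, distMatrix (Gstar (2*s)) x y * (v x * v y))
        = 2 * v (Sum.inl 0) * (∑ i, v (Sum.inr (Sum.inl i)))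
          + 2 * v (Sum.inl 0) * v (Sum.inr (Sum.inr 0))
          + 4 * ((∑ i, v (Sum.inr (Sum.inl i))) * v (Sum.inr (Sum.inr 0)))
          + ((∑ i, v (Sum.inr (Sum.inl i))) ^ 2 - ∑ i, v (Sum.inr (Sum.inl i)) ^ 2) := by
      simp only [Fintype.sum_sum_type, Fin.sum_univ_one, hD1, hD2, hD3, hD4, hD5, hD6,
        hD7, hD8, hD9, zero_mul, one_mul, Finset.sum_const_zero, zero_add, add_zero,
        Finset.sum_add_distrib]
      rw [offdiag_quad (fun i => v (Sum.inr (Sum.inl i)))]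
      have e1 : ∑ j : Fin (2*s-2), v (Sum.inl 0) * v (Sum.inr (Sum.inl j))
          = v (Sum.inl 0) * ∑ j : Fin (2*s-2), v (Sum.inr (Sum.inl j)) :=
        (Finset.mul_sum _ _ _).symm
      have e2 : ∑ i : Fin (2*s-2), v (Sum.inr (Sum.inl i)) * v (Sum.inl 0)
          = (∑ i : Fin (2*s-2), v (Sum.inr (Sum.inl i))) * v (Sum.inl 0) :=
        (Finset.sum_mul _ _ _).symm
      have e4 : ∑ i : Fin (2*s-2), 2 * (v (Sum.inr (Sum.inl i)) * v (Sum.inr (Sum.inr 0)))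
          = 2 * ((∑ i : Fin (2*s-2), v (Sum.inr (Sum.inl i))) * v (Sum.inr (Sum.inr 0))) := by
        rw [← Finset.mul_sum, ← Finset.sum_mul]
      have e5 : ∑ j : Fin (2*s-2), 2 * (v (Sum.inr (Sum.inr 0)) * v (Sum.inr (Sum.inl j)))
          = 2 * (v (Sum.inr (Sum.inr 0)) * ∑ j : Fin (2*s-2), v (Sum.inr (Sum.inl j))) := by
        rw [← Finset.mul_sum, ← Finset.mul_sum]
      rw [e1, e2, e4, e5]
      ring
    have hcs : (∑ i, v (Sum.inr (Sum.inl i))) ^ 2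
        ≤ (2*S - 2) * ∑ i, v (Sum.inr (Sum.inl i)) ^ 2 := by
      have h := sq_sum_le_card_mul_sum_sq (s := (Finset.univ : Finset (Fin (2*s-2))))
        (f := fun i => v (Sum.inr (Sum.inl i)))
      rw [Finset.card_univ, Fintype.card_fin] at h
      calc (∑ i, v (Sum.inr (Sum.inl i))) ^ 2
          ≤ ((2*s - 2 : ℕ) : ℝ) * ∑ i, v (Sum.inr (Sum.inl i)) ^ 2 := by exact_mod_cast h
        _ = (2*S - 2) * ∑ i, v (Sum.inr (Sum.inl i)) ^ 2 := by rw [hkR]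
    have hN : 0 < v (Sum.inl 0) ^ 2 + ((∑ i, v (Sum.inr (Sum.inl i)) ^ 2)
        + v (Sum.inr (Sum.inr 0)) ^ 2) := by
      rw [← hnorm]; exact sum_sq_pos' hv0
    have hfin : μ * (v (Sum.inl 0) ^ 2 + ((∑ i, v (Sum.inr (Sum.inl i)) ^ 2)
        + v (Sum.inr (Sum.inr 0)) ^ 2))
        = 2 * v (Sum.inl 0) * (∑ i, v (Sum.inr (Sum.inl i)))
          + 2 * v (Sum.inl 0) * v (Sum.inr (Sum.inr 0))
          + 4 * ((∑ i, v (Sum.inr (Sum.inl i))) * v (Sum.inr (Sum.inr 0)))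
          + ((∑ i, v (Sum.inr (Sum.inl i))) ^ 2 - ∑ i, v (Sum.inr (Sum.inl i)) ^ 2) := by
      rw [← hnorm, hquad, hQ]
    have hkey := keyineq (a := v (Sum.inl 0)) (b := v (Sum.inr (Sum.inr 0)))
      (m := ∑ i, v (Sum.inr (Sum.inl i))) (p := ∑ i, v (Sum.inr (Sum.inl i)) ^ 2)
      hS5 hcs
    have hmu : μ * (v (Sum.inl 0) ^ 2 + ((∑ i, v (Sum.inr (Sum.inl i)) ^ 2)
        + v (Sum.inr (Sum.inr 0)) ^ 2))
        ≤ C * (v (Sum.inl 0) ^ 2 + ((∑ i, v (Sum.inr (Sum.inl i)) ^ 2)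
        + v (Sum.inr (Sum.inr 0)) ^ 2)) := by
      rw [hfin, hCdef, div_mul_eq_mul_div, le_div_iff₀ hSpos]
      nlinarith [hkey]
    exact le_of_mul_le_mul_right (by linarith [hmu]) hN
  -- ==================== lower bound for starLike ====================
  have hlow : lam ≤ distSpecRad (starLike (2*s) (2*s/2)) := by
    rw [distSpecRad_eq]
    have ht : 2*s/2 = s := by omega
    have hr : 2*s - 2*s/2 = s := by omega
    have htR : ((2*s/2 : ℕ) : ℝ) = S := by rw [ht, hSdef]
    have hrR : ((2*s - 2*s/2 : ℕ) : ℝ) = S := by rw [hr, hSdef]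
    set α : ℝ := (lam - (2*S - 2))/S with hαdef
    have hα' : S * α = lam - (2*S - 2) := by
      rw [hαdef]; field_simp
    have halg : lam * lam - (3*S - 3) * lam + (S^2 - 4*S + 2) = 0 := by
      rw [hlamdef]
      linear_combination (1/4 : ℝ) * hR2
    have heq1 : (S - 1) * α + S = lam * α := by
      have h1 : S * ((S - 1) * α + S) = S * (lam * α) := by
        have h2 : S * ((S - 1) * α + S) = (S - 1) * (S * α) + S^2 := by ring
        have h3 : S * (lam * α) = lam * (S * α) := by ring
        rw [h2, h3, hα']
        linear_combination -halg
      exact mul_left_cancel₀ (ne_of_gt hSpos) h1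
    have heq2 : S * α + (S - 1) * 2 = lam := by linarith [hα']
    set v : (Fin (2*s/2) ⊕ Fin (2*s - 2*s/2)) → ℝ :=
      Sum.elim (fun _ => α) (fun _ => (1:ℝ)) with hvdef
    have hv0 : v ≠ 0 := by
      intro h
      have h1 := congrFun h (Sum.inr ⟨0, by omega⟩)
      simp [hvdef] at h1
    -- entry lemmas
    have hll : ∀ i j : Fin (2*s/2),
        distMatrix (starLike (2*s) (2*s/2)) (Sum.inl i) (Sum.inl j)
          = if i = j then 0 else 1 := by
      intro i j
      by_cases h : i = j
      · subst h
        simp [distMatrix, SimpleGraph.dist_self]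
      · have hd : (starLike (2*s) (2*s/2)).dist (Sum.inl i) (Sum.inl j) = 1 :=
          SimpleGraph.dist_eq_one_iff_adj.mpr (by simp [starLike, graphJoin, h])
        simp [distMatrix, hd, h]
    have hlr : ∀ (i : Fin (2*s/2)) (j : Fin (2*s - 2*s/2)),
        distMatrix (starLike (2*s) (2*s/2)) (Sum.inl i) (Sum.inr j) = 1 := by
      intro i j
      have hd : (starLike (2*s) (2*s/2)).dist (Sum.inl i) (Sum.inr j) = 1 :=
        SimpleGraph.dist_eq_one_iff_adj.mpr (by simp [starLike, graphJoin])
      simp [distMatrix, hd]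
    have hrl : ∀ (j : Fin (2*s - 2*s/2)) (i : Fin (2*s/2)),
        distMatrix (starLike (2*s) (2*s/2)) (Sum.inr j) (Sum.inl i) = 1 := by
      intro j i
      have hd : (starLike (2*s) (2*s/2)).dist (Sum.inr j) (Sum.inl i) = 1 :=
        SimpleGraph.dist_eq_one_iff_adj.mpr (by simp [starLike, graphJoin])
      simp [distMatrix, hd]
    have hrr : ∀ i j : Fin (2*s - 2*s/2),
        distMatrix (starLike (2*s) (2*s/2)) (Sum.inr i) (Sum.inr j)
          = if i = j then 0 else 2 := by
      intro i j
      by_cases h : i = j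
      · subst h
        simp [distMatrix, SimpleGraph.dist_self]
      · have hd : (starLike (2*s) (2*s/2)).dist (Sum.inr i) (Sum.inr j) = 2 := by
          apply dist_eq_two' (w := Sum.inl ⟨0, by omega⟩)
          · simp [h]
          · simp [starLike, graphJoin]
          · simp [starLike, graphJoin]
          · simp [starLike, graphJoin]
        simp [distMatrix, hd, h]
    -- eigenvector equation
    have hveq : (distMatrix (starLike (2*s) (2*s/2))).mulVec v = lam • v := by
      funext x
      cases x with
      | inl i =>
        rw [mulVec_apply', Fintype.sum_sum_type]
        simp only [hll, hlr, hvdef, Sum.elim_inl, Sum.elim_inr, mul_one, one_mul,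
          Pi.smul_apply, smul_eq_mul]
        have e1 : ∀ j : Fin (2*s/2), (if i = j then (0:ℝ) else 1) * α
            = if i = j then 0 else α := fun j => by split <;> ring
        rw [Finset.sum_congr rfl fun j _ => e1 j, sum_ite_ne i α, Finset.sum_const,
          Finset.card_univ, Fintype.card_fin, nsmul_eq_mul, htR, hrR]
        linarith [heq1]
      | inr j =>
        rw [mulVec_apply', Fintype.sum_sum_type]
        simp only [hrl, hrr, hvdef, Sum.elim_inl, Sum.elim_inr, mul_one, one_mul,
          Pi.smul_apply, smul_eq_mul]
        rw [sum_ite_ne j 2, Finset.sum_const, Finset.card_univ, Fintype.card_fin,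
          nsmul_eq_mul, htR, hrR]
        linarith [heq2]
    -- bounded above
    have hbdd : BddAbove {μ : ℝ | ∃ u : (Fin (2*s/2) ⊕ Fin (2*s - 2*s/2)) → ℝ,
        u ≠ 0 ∧ (distMatrix (starLike (2*s) (2*s/2))).mulVec u = μ • u} := by
      refine ⟨3*S, ?_⟩
      rintro μ ⟨u, hu0, hu⟩
      refine eig_le_rowsum (A := distMatrix (starLike (2*s) (2*s/2)))
        (fun i j => Nat.cast_nonneg _) ?_ hu0 hu
      intro x
      cases x with
      | inl i =>
        simp only [Fintype.sum_sum_type, hll, hlr]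
        rw [sum_ite_ne i 1, Finset.sum_const, Finset.card_univ, Fintype.card_fin,
          nsmul_eq_mul, htR, hrR]
        linarith
      | inr j =>
        simp only [Fintype.sum_sum_type, hrl, hrr]
        rw [sum_ite_ne j 2, Finset.sum_const, Finset.card_univ, Fintype.card_fin,
          nsmul_eq_mul, htR, hrR]
        linarith
    exact le_csSup hbdd ⟨v, hv0, hveq⟩
  calc distSpecRad (Gstar (2*s)) ≤ C := hup
    _ < lam := hClam
    _ ≤ distSpecRad (starLike (2*s) (2*s/2)) := hlow
end

section
/- Let s be an integer with 1 ≤ s ≤ 4 and let n = 2s (so n is even with 2 ≤ n ≤ 8). Then λ₁(D(S_{n,n/2})) ≤ λ₁(D(K₁ ∨ (K_{n−2} ∪ K₁))), with equality if and only if n = 2. -/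
open Finset

-- weighted Gershgorin
lemma eig_abs_le {V : Type*} [Fintype V] [DecidableEq V] (A : Matrix V V ℝ) (w : V → ℝ) (hw : ∀ i, 0 < w i)
    (C : ℝ) (hC : ∀ i, ∑ j, |A i j| * w j ≤ C * w i) {μ : ℝ}
    (hμ : Module.End.HasEigenvalue (Matrix.toLin' A) μ) : |μ| ≤ C := by
  classical
  obtain ⟨v, hv⟩ := hμ.exists_hasEigenvector
  have hve : A.mulVec v = μ • v := by
    have := hv.apply_eq_smul
    rwa [Matrix.toLin'_apply] at this
  have hne : ∃ k, v k ≠ 0 := by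
    by_contra h
    push_neg at h
    exact hv.2 (funext h)
  obtain ⟨k, hk⟩ := hne
  have hVne : (Finset.univ : Finset V).Nonempty := ⟨k, mem_univ k⟩
  obtain ⟨i, -, hi⟩ := Finset.exists_max_image univ (fun i => |v i| / w i) hVne
  have hipos : 0 < |v i| / w i := by
    have h1 : 0 < |v k| / w k := div_pos (abs_pos.mpr hk) (hw k)
    exact lt_of_lt_of_le h1 (hi k (mem_univ k))
  have hvipos : 0 < |v i| := by
    have h2 := mul_pos hipos (hw i)
    rwa [div_mul_cancel₀ _ (ne_of_gt (hw i))] at h2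
  have hrow : ∑ j, A i j * v j = μ * v i := by
    have := congrFun hve i
    simpa [Matrix.mulVec, dotProduct] using this
  have key : |μ| * |v i| ≤ C * |v i| := by
    calc |μ| * |v i| = |∑ j, A i j * v j| := by rw [hrow, abs_mul]
    _ ≤ ∑ j, |A i j * v j| := Finset.abs_sum_le_sum_abs _ _
    _ = ∑ j, |A i j| * |v j| := by simp [abs_mul]
    _ ≤ ∑ j, |A i j| * (w j * (|v i| / w i)) := by
        apply Finset.sum_le_sum
        intro j _
        have h1 : |v j| / w j ≤ |v i| / w i := hi j (mem_univ j)
        have h2 : |v j| ≤ w j * (|v i| / w i) := by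
          rw [div_le_div_iff₀ (hw j) (hw i)] at h1
          rw [mul_comm, div_mul_eq_mul_div, le_div_iff₀ (hw i)]
          linarith
        nlinarith [abs_nonneg (A i j)]
    _ = (∑ j, |A i j| * w j) * (|v i| / w i) := by
        rw [Finset.sum_mul]
        congr 1; ext j; ring
    _ ≤ (C * w i) * (|v i| / w i) := by
        apply mul_le_mul_of_nonneg_right (hC i)
        positivity
    _ = C * |v i| := by
        rw [mul_assoc, mul_comm (w i) (|v i| / w i), div_mul_cancel₀ _ (ne_of_gt (hw i))]
  exact le_of_mul_le_mul_right key hvipos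

lemma hasEigenvalue_of_mulVec {V : Type*} [Fintype V] [DecidableEq V] (A : Matrix V V ℝ)
    {μ : ℝ} {v : V → ℝ} (hv : v ≠ 0) (h : A.mulVec v = μ • v) :
    Module.End.HasEigenvalue (Matrix.toLin' A) μ := by
  apply Module.End.hasEigenvalue_of_hasEigenvector (x := v)
  refine ⟨Module.End.mem_eigenspace_iff.mpr ?_, hv⟩
  rwa [Matrix.toLin'_apply]

lemma distSpecRad_le {V : Type*} [Fintype V] [DecidableEq V] (G : SimpleGraph V)
    (C : ℝ) (hC0 : 0 ≤ C)
    (h : ∀ μ : ℝ, Module.End.HasEigenvalue (Matrix.toLin' (distMatrix G)) μ → μ ≤ C) :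
    distSpecRad G ≤ C := by
  apply Real.sSup_le _ hC0
  intro x hx
  exact h x hx

lemma le_distSpecRad {V : Type*} [Fintype V] [DecidableEq V] (G : SimpleGraph V)
    (C : ℝ) (hC : ∀ μ : ℝ, Module.End.HasEigenvalue (Matrix.toLin' (distMatrix G)) μ → μ ≤ C)
    {μ : ℝ} (hμ : Module.End.HasEigenvalue (Matrix.toLin' (distMatrix G)) μ) :
    μ ≤ distSpecRad G := by
  apply le_csSup ⟨C, fun x hx => hC x hx⟩ hμ

open scoped Classical in
lemma dist_formula {V : Type*} [Fintype V] [DecidableEq V] (G : SimpleGraph V)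
    (h : ∀ i j : V, i ≠ j → ¬ G.Adj i j → ∃ k, G.Adj i k ∧ G.Adj k j) (i j : V) :
    G.dist i j = if i = j then 0 else if G.Adj i j then 1 else 2 := by
  by_cases hij : i = j
  · simp [hij]
  · by_cases ha : G.Adj i j
    · simp [hij, ha, SimpleGraph.dist_eq_one_iff_adj.mpr ha]
    · obtain ⟨k, h1, h2⟩ := h i j hij ha
      have hle : G.dist i j ≤ 2 := by
        simpa using SimpleGraph.dist_le
          (SimpleGraph.Walk.cons h1 (SimpleGraph.Walk.cons h2 SimpleGraph.Walk.nil))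
      have hr : G.Reachable i j :=
        ⟨SimpleGraph.Walk.cons h1 (SimpleGraph.Walk.cons h2 SimpleGraph.Walk.nil)⟩
      have hpos : 0 < G.dist i j := hr.pos_dist_of_ne hij
      have hne1 : G.dist i j ≠ 1 := fun hc => ha (SimpleGraph.dist_eq_one_iff_adj.mp hc)
      simp only [hij, ha, if_false]
      omega

lemma graphJoin_common {t : ℕ} (ht : 0 < t) {β : Type*} (H : SimpleGraph β) :
    ∀ i j, i ≠ j → ¬ (graphJoin (⊤ : SimpleGraph (Fin t)) H).Adj i j →
      ∃ k, (graphJoin (⊤ : SimpleGraph (Fin t)) H).Adj i k ∧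
        (graphJoin (⊤ : SimpleGraph (Fin t)) H).Adj k j := by
  rintro (a | a) (b | b) hij ha
  · exact absurd (show (⊤ : SimpleGraph (Fin t)).Adj a b from by
      simp only [SimpleGraph.top_adj]; exact fun h => hij (by rw [h])) ha
  · exact absurd trivial ha
  · exact absurd trivial ha
  · exact ⟨Sum.inl ⟨0, ht⟩, trivial, trivial⟩

lemma sum_ite_const {t : ℕ} (i : Fin t) (a b : ℝ) :
    ∑ j : Fin t, (if i = j then a else b) = a + ((t : ℝ) - 1) * b := by
  have h : ∀ j : Fin t, (if i = j then a else b) = b + (if i = j then a - b else 0) := by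
    intro j; split <;> ring
  rw [Finset.sum_congr rfl fun j _ => h j, Finset.sum_add_distrib, Finset.sum_ite_eq]
  simp [Finset.card_univ]
  ring

lemma starLike_distMatrix {n t : ℕ} (ht : 0 < t) :
    distMatrix (starLike n t) = fun i j =>
      match i, j with
      | Sum.inl a, Sum.inl b => if a = b then 0 else 1
      | Sum.inr a, Sum.inr b => if a = b then 0 else 2
      | _, _ => 1 := by
  classical
  funext i j
  rw [distMatrix, show starLike n t = graphJoin (⊤ : SimpleGraph (Fin t)) ⊥ from rfl,
    dist_formula _ (graphJoin_common ht _)]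
  rcases i with a | a <;> rcases j with b | b
  · by_cases hab : a = b <;> simp [graphJoin, hab]
  · simp [graphJoin]
  · simp [graphJoin]
  · by_cases hab : a = b <;> simp [graphJoin, hab]

lemma Gstar_distMatrix {n : ℕ} :
    distMatrix (Gstar n) = fun i j =>
      match i, j with
      | Sum.inl _, Sum.inl _ => 0
      | Sum.inr (Sum.inl a), Sum.inr (Sum.inl b) => if a = b then 0 else 1
      | Sum.inr (Sum.inr _), Sum.inr (Sum.inr _) => 0
      | Sum.inr (Sum.inl _), Sum.inr (Sum.inr _) => 2
      | Sum.inr (Sum.inr _), Sum.inr (Sum.inl _) => 2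
      | _, _ => 1 := by
  classical
  funext i j
  rw [distMatrix, show Gstar n = graphJoin (⊤ : SimpleGraph (Fin 1))
      ((⊤ : SimpleGraph (Fin (n - 2))) ⊕g (⊥ : SimpleGraph (Fin 1))) from rfl,
    dist_formula _ (graphJoin_common one_pos _)]
  rcases i with a | (a | a) <;> rcases j with b | (b | b)
  · simp [graphJoin, Subsingleton.elim a b]
  · simp [graphJoin]
  · simp [graphJoin]
  · simp [graphJoin]
  · by_cases hab : a = b <;> simp [graphJoin, hab]
  · simp [graphJoin]
  · simp [graphJoin]
  · simp [graphJoin]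
  · simp [graphJoin, Subsingleton.elim a b]

lemma starLike_eig_le (s : ℕ) (hs : 0 < s) (t C : ℝ) (ht : 0 < t)
    (h1 : (s : ℝ) - 1 + s * t ≤ C)
    (h2 : (s : ℝ) + 2 * ((s : ℝ) - 1) * t ≤ C * t) :
    ∀ μ : ℝ, Module.End.HasEigenvalue
      (Matrix.toLin' (distMatrix (starLike (2 * s) s))) μ → |μ| ≤ C := by
  classical
  intro μ hμ
  apply eig_abs_le _ (Sum.elim (fun _ => (1:ℝ)) (fun _ => t)) _ C _ hμ
  · rintro (a | a) <;> simp [ht]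
  · intro i
    rw [starLike_distMatrix hs]
    have hcard : ((2 * s - s : ℕ) : ℝ) = (s : ℝ) := by
      rw [show 2 * s - s = s from by omega]
    rcases i with a | a
    · simp only [Fintype.sum_sum_type, Sum.elim_inl, Sum.elim_inr]
      simp only [apply_ite abs, abs_zero, abs_one, ite_mul, zero_mul, one_mul, mul_one,
        sum_ite_const, Finset.sum_const, Finset.card_univ, Fintype.card_fin, nsmul_eq_mul, abs_two]
      rw [hcard]; linarith
    · simp only [Fintype.sum_sum_type, Sum.elim_inl, Sum.elim_inr]
      simp only [apply_ite abs, abs_zero, abs_one, ite_mul, zero_mul, one_mul, mul_one,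
        sum_ite_const, Finset.sum_const, Finset.card_univ, Fintype.card_fin, nsmul_eq_mul, abs_two]
      rw [hcard]; nlinarith [ht]

lemma Gstar_eig_le (n : ℕ) :
    ∀ μ : ℝ, Module.End.HasEigenvalue
      (Matrix.toLin' (distMatrix (Gstar n))) μ → |μ| ≤ 2 * ((n - 2 : ℕ) : ℝ) + 1 := by
  classical
  intro μ hμ
  apply eig_abs_le _ (fun _ => (1:ℝ)) (fun _ => one_pos) _ _ hμ
  intro i
  rw [Gstar_distMatrix]
  rcases i with a | (a | a)
  · simp only [Fintype.sum_sum_type, Sum.elim_inl, Sum.elim_inr]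
    simp only [apply_ite abs, abs_zero, abs_one, ite_mul, zero_mul, one_mul, mul_one,
      sum_ite_const, Finset.sum_const, Finset.card_univ, Fintype.card_fin, nsmul_eq_mul, abs_two]
    push_cast
    have : (0:ℝ) ≤ ((n-2:ℕ):ℝ) := Nat.cast_nonneg _
    linarith
  · have hm : (1:ℝ) ≤ ((n-2:ℕ):ℝ) := by
      have := a.pos
      exact_mod_cast this
    simp only [Fintype.sum_sum_type, Sum.elim_inl, Sum.elim_inr]
    simp only [apply_ite abs, abs_zero, abs_one, ite_mul, zero_mul, one_mul, mul_one,
      sum_ite_const, Finset.sum_const, Finset.card_univ, Fintype.card_fin, nsmul_eq_mul, abs_two]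
    push_cast
    linarith
  · simp only [Fintype.sum_sum_type, Sum.elim_inl, Sum.elim_inr]
    simp only [apply_ite abs, abs_zero, abs_one, ite_mul, zero_mul, one_mul, mul_one,
      sum_ite_const, Finset.sum_const, Finset.card_univ, Fintype.card_fin, nsmul_eq_mul, abs_two]
    push_cast
    linarith

lemma Gstar_eigen (n : ℕ) (hn : 3 ≤ n) (μ : ℝ) (hμ : 2 ≤ μ)
    (hc : μ^3 = (((n-2:ℕ):ℝ) - 1) * μ^2 + (5*((n-2:ℕ):ℝ)+1) * μ + (3*((n-2:ℕ):ℝ)+1)) :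
    Module.End.HasEigenvalue (Matrix.toLin' (distMatrix (Gstar n))) μ := by
  classical
  set m : ℝ := ((n-2:ℕ):ℝ) with hm_def
  have hm : 1 ≤ m := by
    have h : 1 ≤ n - 2 := by omega
    rw [hm_def]
    exact_mod_cast h
  apply hasEigenvalue_of_mulVec _
    (v := Sum.elim (fun _ => m*(μ+2)) (Sum.elim (fun _ => μ^2-1) (fun _ => m*(2*μ+1))))
  · intro h0
    have := congrFun h0 (Sum.inl 0)
    simp only [Sum.elim_inl, Pi.zero_apply] at this
    nlinarith
  · funext x
    rw [Gstar_distMatrix]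
    rcases x with a | (a | a)
    · simp only [Matrix.mulVec, dotProduct, Fintype.sum_sum_type, Sum.elim_inl,
        Sum.elim_inr, Pi.smul_apply, smul_eq_mul]
      simp only [apply_ite (· * (μ^2-1)), ite_mul, zero_mul, one_mul, mul_one,
        sum_ite_const, Finset.sum_const, Finset.card_univ, Fintype.card_fin, nsmul_eq_mul]
      rw [← hm_def]
      push_cast
      ring
    · simp only [Matrix.mulVec, dotProduct, Fintype.sum_sum_type, Sum.elim_inl,
        Sum.elim_inr, Pi.smul_apply, smul_eq_mul]
      simp only [apply_ite (· * (μ^2-1)), ite_mul, zero_mul, one_mul, mul_one,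
        sum_ite_const, Finset.sum_const, Finset.card_univ, Fintype.card_fin, nsmul_eq_mul]
      rw [← hm_def]
      push_cast
      linear_combination -hc
    · simp only [Matrix.mulVec, dotProduct, Fintype.sum_sum_type, Sum.elim_inl,
        Sum.elim_inr, Pi.smul_apply, smul_eq_mul]
      simp only [apply_ite (· * (μ^2-1)), ite_mul, zero_mul, one_mul, mul_one,
        sum_ite_const, Finset.sum_const, Finset.card_univ, Fintype.card_fin, nsmul_eq_mul]
      rw [← hm_def]
      push_cast
      ring

lemma starLike2_eigen :
    Module.End.HasEigenvalue (Matrix.toLin' (distMatrix (starLike 2 1))) 1 := by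
  classical
  apply hasEigenvalue_of_mulVec _ (v := Sum.elim (fun _ => (1:ℝ)) (fun _ => 1))
  · intro h0
    have := congrFun h0 (Sum.inl 0)
    simp at this
  · funext x
    rw [starLike_distMatrix one_pos]
    rcases x with a | a <;>
      (have ha : a = ⟨0, by omega⟩ := by omega) <;>
      subst ha <;>
      simp [Matrix.mulVec, dotProduct, Fintype.sum_sum_type, Fin.sum_univ_succ]

lemma Gstar2_eigen :
    Module.End.HasEigenvalue (Matrix.toLin' (distMatrix (Gstar 2))) 1 := by
  classical
  apply hasEigenvalue_of_mulVec _
    (v := Sum.elim (fun _ => (1:ℝ)) (Sum.elim (fun _ => 0) (fun _ => 1)))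
  · intro h0
    have := congrFun h0 (Sum.inl 0)
    simp at this
  · funext x
    rw [Gstar_distMatrix]
    rcases x with a | (a | a)
    · simp [Matrix.mulVec, dotProduct, Fintype.sum_sum_type, Fin.sum_univ_succ]
    · exact absurd a.pos (by omega)
    · simp [Matrix.mulVec, dotProduct, Fintype.sum_sum_type, Fin.sum_univ_succ]

lemma exists_root (m L U : ℝ) (hLU : L ≤ U)
    (hL : L^3 - (m-1)*L^2 - (5*m+1)*L - (3*m+1) ≤ 0)
    (hU : 0 ≤ U^3 - (m-1)*U^2 - (5*m+1)*U - (3*m+1)) :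
    ∃ μ, L ≤ μ ∧ μ ≤ U ∧ μ^3 = (m-1)*μ^2 + (5*m+1)*μ + (3*m+1) := by
  have hcont : ContinuousOn (fun x : ℝ => x^3 - (m-1)*x^2 - (5*m+1)*x - (3*m+1))
      (Set.Icc L U) := (by continuity : Continuous _).continuousOn
  have h0 : (0:ℝ) ∈ Set.Icc ((fun x : ℝ => x^3 - (m-1)*x^2 - (5*m+1)*x - (3*m+1)) L)
      ((fun x : ℝ => x^3 - (m-1)*x^2 - (5*m+1)*x - (3*m+1)) U) := ⟨hL, hU⟩
  obtain ⟨μ, hmem, hf⟩ := intermediate_value_Icc hLU hcont h0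
  exact ⟨μ, hmem.1, hmem.2, by simp only at hf; linarith⟩

lemma starLike2_val : distSpecRad (starLike 2 1) = 1 := by
  have hb : ∀ μ : ℝ, Module.End.HasEigenvalue
      (Matrix.toLin' (distMatrix (starLike 2 1))) μ → μ ≤ 1 := fun μ h =>
    (abs_le.mp (starLike_eig_le 1 one_pos 1 1 one_pos (by norm_num) (by norm_num) μ h)).2
  exact le_antisymm (distSpecRad_le _ 1 one_pos.le hb)
    (le_distSpecRad _ 1 hb starLike2_eigen)

lemma Gstar2_val : distSpecRad (Gstar 2) = 1 := by
  have hb : ∀ μ : ℝ, Module.End.HasEigenvalue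
      (Matrix.toLin' (distMatrix (Gstar 2))) μ → μ ≤ 1 := by
    intro μ h
    have := (abs_le.mp (Gstar_eig_le 2 μ h)).2
    norm_num at this
    exact this
  exact le_antisymm (distSpecRad_le _ 1 one_pos.le hb)
    (le_distSpecRad _ 1 hb Gstar2_eigen)

lemma case4 : distSpecRad (starLike 4 2) < distSpecRad (Gstar 4) := by
  obtain ⟨μ, hL, hU, hc⟩ := exists_root 2 4.05 5 (by norm_num) (by norm_num) (by norm_num)
  have hm : ((4-2:ℕ):ℝ) = 2 := by norm_num
  have hB : μ ≤ distSpecRad (Gstar 4) :=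
    le_distSpecRad _ _ (fun ν h => (abs_le.mp (Gstar_eig_le 4 ν h)).2)
      (Gstar_eigen 4 (by norm_num) μ (by linarith) (by rw [hm]; exact hc))
  have hA : distSpecRad (starLike 4 2) ≤ 3.6 :=
    distSpecRad_le _ _ (by norm_num) (fun ν h =>
      (abs_le.mp (starLike_eig_le 2 (by norm_num) 1.3 3.6 (by norm_num) (by norm_num)
        (by norm_num) ν h)).2)
  linarith

lemma case6 : distSpecRad (starLike 6 3) < distSpecRad (Gstar 6) := by
  obtain ⟨μ, hL, hU, hc⟩ := exists_root 4 6.2 7 (by norm_num) (by norm_num) (by norm_num)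
  have hm : ((6-2:ℕ):ℝ) = 4 := by norm_num
  have hB : μ ≤ distSpecRad (Gstar 6) :=
    le_distSpecRad _ _ (fun ν h => (abs_le.mp (Gstar_eig_le 6 ν h)).2)
      (Gstar_eigen 6 (by norm_num) μ (by linarith) (by rw [hm]; exact hc))
  have hA : distSpecRad (starLike 6 3) ≤ 6.17 :=
    distSpecRad_le _ _ (by norm_num) (fun ν h =>
      (abs_le.mp (starLike_eig_le 3 (by norm_num) 1.39 6.17 (by norm_num) (by norm_num)
        (by norm_num) ν h)).2)
  linarith

lemma case8 : distSpecRad (starLike 8 4) < distSpecRad (Gstar 8) := by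
  obtain ⟨μ, hL, hU, hc⟩ := exists_root 6 8.775 9 (by norm_num) (by norm_num) (by norm_num)
  have hm : ((8-2:ℕ):ℝ) = 6 := by norm_num
  have hB : μ ≤ distSpecRad (Gstar 8) :=
    le_distSpecRad _ _ (fun ν h => (abs_le.mp (Gstar_eig_le 8 ν h)).2)
      (Gstar_eigen 8 (by norm_num) μ (by linarith) (by rw [hm]; exact hc))
  have hA : distSpecRad (starLike 8 4) ≤ 8.7721 :=
    distSpecRad_le _ _ (by norm_num) (fun ν h =>
      (abs_le.mp (starLike_eig_le 4 (by norm_num) 1.443 8.7721 (by norm_num) (by norm_num)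
        (by norm_num) ν h)).2)
  linarith

theorem statement13 (s n : ℕ) (hs1 : 1 ≤ s) (hs4 : s ≤ 4) (hn : n = 2 * s) :
    distSpecRad (starLike n (n / 2)) ≤ distSpecRad (Gstar n) ∧
      (distSpecRad (starLike n (n / 2)) = distSpecRad (Gstar n) ↔ n = 2) := by
  subst hn
  interval_cases s
  · exact ⟨le_of_eq (starLike2_val.trans Gstar2_val.symm), fun _ => rfl,
      fun _ => starLike2_val.trans Gstar2_val.symm⟩
  · have h := case4
    exact ⟨h.le, fun he => absurd he (ne_of_lt h), fun h2 => by omega⟩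
  · have h := case6
    exact ⟨h.le, fun he => absurd he (ne_of_lt h), fun h2 => by omega⟩
  · have h := case8
    exact ⟨h.le, fun he => absurd he (ne_of_lt h), fun h2 => by omega⟩
end
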